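/- arXiv:2406.14013 — 3 statements merged into one kernel-verified Lean document; each statement's English description precedes it below -/
import Mathlib

section
/- Let A and B be g-circulant matrices of order k × k over a commutative ring. Then A·Bᵀ is a circulant matrix. -/
/-- The `g`-circulant matrix with first row `c`: entry `(i,j)` is `c (j - g*i)`. -/
def gCirc {k : ℕ} {R : Type*} (g : ℕ) (c : ZMod k → R) : Matrix (ZMod k) (ZMod k) R :=
  Matrix.of fun i j => c (j - (g : ZMod k) * i)

/-- A matrix is `g`-circulant if it equals `gCirc g c` for some first row `c`. -/
def IsGCirc {k : ℕ} {R : Type*} (g : ℕ) (A : Matrix (ZMod k) (ZMod k) R) : Prop :=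
  ∃ c : ZMod k → R, A = gCirc g c

theorem gCirc_mul_transpose_gCirc {k : ℕ} [NeZero k] {R : Type*} [NonUnitalNonAssocSemiring R]
    (g : ℕ) (a b : ZMod k → R) :
    gCirc g a * (gCirc g b).transpose =
      gCirc 1 fun d => ∑ l : ZMod k, a l * b (l - (g : ZMod k) * d) := by
  ext i j
  simp only [Matrix.mul_apply, Matrix.transpose_apply, gCirc, Matrix.of_apply, Nat.cast_one,
    one_mul]
  -- shifting the summation index by `g * i` leaves only the difference `j - i`
  refine Fintype.sum_equiv (Equiv.subRight ((g : ZMod k) * i)) _ _ fun l => ?_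
  simp only [Equiv.subRight_apply]
  congr 2
  ring

theorem gCirc_mul_transpose_circulant {k : ℕ} [NeZero k] {R : Type*} [CommRing R]
    (g : ℕ) (A B : Matrix (ZMod k) (ZMod k) R)
    (hA : IsGCirc g A) (hB : IsGCirc g B) : IsGCirc 1 (A * B.transpose) := by
  obtain ⟨a, rfl⟩ := hA
  obtain ⟨b, rfl⟩ := hB
  exact ⟨_, gCirc_mul_transpose_gCirc g a b⟩
end

section
/- Let A be the g-circulant matrix of order 2^d × 2^d with first row (c_0, c_1, ..., c_{2^d - 1}) over the finite field F_{2^m}, where g > 1 is odd (so gcd(g, 2^d) = 1). Then A^(2^d) = (c_0^(2^d) + c_1^(2^d) + ... + c_{2^d - 1}^(2^d)) · I. -/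
open Finset Matrix

theorem Finset.sum_pow_expChar_pow_of_pairwise_commute {ι R : Type*} [Semiring R] (p : ℕ)
    [ExpChar R p] (n : ℕ) {s : Finset ι} {f : ι → R}
    (h : (s : Set ι).Pairwise fun i j => Commute (f i) (f j)) :
    (∑ i ∈ s, f i) ^ p ^ n = ∑ i ∈ s, f i ^ p ^ n := by
  classical
  induction s using Finset.induction_on with
  | empty => rw [sum_empty, sum_empty, zero_pow (expChar_pow_pos R p n).ne']
  | insert i s hi ih =>
    rw [sum_insert hi, sum_insert hi, add_pow_expChar_pow_of_commute,
      ih (h.mono (by simp))]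
    refine Commute.sum_right _ _ _ fun j hj => h (by simp) (by simp [hj]) ?_
    rintro rfl
    exact hi hj

theorem Matrix.pow_mulVec_of_mulVec_eq_smul {n R : Type*} [Fintype n] [DecidableEq n]
    [CommSemiring R] {M : Matrix n n R} {v : n → R} {a : R} (h : M *ᵥ v = a • v) (k : ℕ) :
    (M ^ k) *ᵥ v = a ^ k • v := by
  induction k with
  | zero => simp
  | succ k ih => rw [pow_succ', ← mulVec_mulVec, ih, mulVec_smul, h, smul_smul, pow_succ]

theorem Matrix.pow_card_eq_zero_of_isNilpotent {n R : Type*} [Fintype n] [DecidableEq n]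
    [CommRing R] [IsDomain R] {M : Matrix n n R} (hM : IsNilpotent M) :
    M ^ Fintype.card n = 0 := by
  have hchar : M.charpoly = Polynomial.X ^ Fintype.card n :=
    sub_eq_zero.mp (isNilpotent_charpoly_sub_pow_of_isNilpotent hM).eq_zero
  simpa [hchar] using aeval_self_charpoly M

theorem Matrix.pow_char_pow_eq_smul_one {n R : Type*} [Fintype n] [DecidableEq n] [Nonempty n]
    [CommRing R] [IsDomain R] (p : ℕ) [Fact p.Prime] [CharP R p] {M : Matrix n n R} {a : R}
    {N j : ℕ} (hM : M ^ p ^ N = a ^ p ^ N • 1) (hj : Fintype.card n ≤ p ^ j) :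
    M ^ p ^ j = a ^ p ^ j • 1 := by
  have hcomm : Commute M (a • 1) := (Commute.one_right M).smul_right a
  have hnil : IsNilpotent (M - a • 1) :=
    ⟨p ^ N, by rw [sub_pow_char_pow_of_commute p N hcomm, smul_pow, one_pow, hM, sub_self]⟩
  have hzero : (M - a • 1) ^ p ^ j = 0 :=
    pow_eq_zero_of_le hj (pow_card_eq_zero_of_isNilpotent hnil)
  rw [← sub_add_cancel M (a • 1), add_pow_char_pow_of_commute p j (hcomm.sub_left (.refl _)),
    hzero, zero_add, smul_pow, one_pow]

theorem ZMod.natCast_pow_two_pow_eq_one {g : ℕ} (hg : Odd g) (d : ℕ) :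
    (g : ZMod (2 ^ d)) ^ 2 ^ d = 1 := by
  obtain ⟨t, ht⟩ : Nat.totient (2 ^ d) ∣ 2 ^ d := by
    cases d with
    | zero => simp
    | succ d => simpa [Nat.totient_prime_pow_succ Nat.prime_two] using pow_dvd_pow 2 d.le_succ
  have h := (Nat.ModEq.pow_totient ((Nat.coprime_two_right.mpr hg).pow_right d)).pow t
  rw [one_pow, ← pow_mul, ← ht] at h
  exact_mod_cast (ZMod.natCast_eq_natCast_iff _ _ _).mpr h

theorem gCirc_congr {k : ℕ} {R : Type*} {g g' : ℕ} (h : (g : ZMod k) = g') (c : ZMod k → R) :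
    gCirc g c = gCirc g' c := by
  simp [gCirc, h]

theorem gCirc_one_single_zero {k : ℕ} {R : Type*} [Zero R] [One R] :
    gCirc 1 (Pi.single 0 1) = (1 : Matrix (ZMod k) (ZMod k) R) := by
  ext i j
  simp [gCirc, one_apply, Pi.single_apply, sub_eq_zero, eq_comm]

section gCirc

variable {k : ℕ} [NeZero k] {R : Type*} [Semiring R]

theorem gCirc_mul (g h : ℕ) (c e : ZMod k → R) :
    gCirc g c * gCirc h e = gCirc (g * h) fun v => ∑ s, c s * e (v - (h : ZMod k) * s) := by
  ext i j
  simp only [mul_apply, gCirc, of_apply]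
  refine Fintype.sum_equiv (Equiv.subRight ((g : ZMod k) * i)) _ _ fun t => ?_
  simp only [Equiv.subRight_apply]
  congr 2
  push_cast
  ring

theorem gCirc_pow (g : ℕ) (c : ZMod k → R) (n : ℕ) :
    ∃ e : ZMod k → R, gCirc g c ^ n = gCirc (g ^ n) e := by
  induction n with
  | zero => exact ⟨_, by rw [pow_zero, pow_zero, gCirc_one_single_zero]⟩
  | succ n ih =>
    obtain ⟨e, he⟩ := ih
    exact ⟨_, by rw [pow_succ', he, gCirc_mul, ← pow_succ']⟩

theorem gCirc_eq_sum_smul_single (g : ℕ) (c : ZMod k → R) :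
    gCirc g c = ∑ s, c s • gCirc g (Pi.single s 1) := by
  ext i j
  simp [gCirc, Matrix.sum_apply, Pi.single_apply]

theorem gCirc_one_single_mul (s t : ZMod k) :
    gCirc 1 (Pi.single s 1) * gCirc 1 (Pi.single t 1) =
      (gCirc 1 (Pi.single (s + t) 1) : Matrix (ZMod k) (ZMod k) R) := by
  rw [gCirc_mul]
  congr
  ext v
  rw [Fintype.sum_eq_single s fun u hu => by simp [hu]]
  simp [Pi.single_apply, sub_eq_iff_eq_add']

theorem gCirc_one_single_pow (s : ZMod k) (n : ℕ) :
    (gCirc 1 (Pi.single s 1) : Matrix (ZMod k) (ZMod k) R) ^ n = gCirc 1 (Pi.single (n • s) 1) := by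
  induction n with
  | zero => rw [pow_zero, zero_smul, gCirc_one_single_zero]
  | succ n ih => rw [pow_succ, ih, gCirc_one_single_mul, succ_nsmul]

theorem gCirc_one_single_pow_eq_one (s : ZMod k) :
    (gCirc 1 (Pi.single s 1) : Matrix (ZMod k) (ZMod k) R) ^ k = 1 := by
  rw [gCirc_one_single_pow, nsmul_eq_mul, ZMod.natCast_self, zero_mul, gCirc_one_single_zero]

theorem gCirc_mulVec_one (g : ℕ) (c : ZMod k → R) :
    gCirc g c *ᵥ (fun _ => 1) = (∑ s, c s) • fun _ => 1 := by
  ext i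
  simp only [mulVec, dotProduct, gCirc, of_apply, mul_one, Pi.smul_apply, smul_eq_mul]
  exact Fintype.sum_equiv (Equiv.subRight ((g : ZMod k) * i)) _ _ fun j => rfl

end gCirc

theorem gCirc_one_pow_card {R : Type*} [CommSemiring R] (p : ℕ) [Fact p.Prime] [CharP R p]
    (n : ℕ) (w : ZMod (p ^ n) → R) :
    gCirc 1 w ^ p ^ n = (∑ s, w s ^ p ^ n) • (1 : Matrix (ZMod (p ^ n)) (ZMod (p ^ n)) R) := by
  have hcomm (s t : ZMod (p ^ n)) : Commute (gCirc 1 (Pi.single s 1) : Matrix _ _ R)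
      (gCirc 1 (Pi.single t 1)) := by
    rw [Commute, SemiconjBy, gCirc_one_single_mul, gCirc_one_single_mul, add_comm]
  rw [gCirc_eq_sum_smul_single, sum_pow_expChar_pow_of_pairwise_commute p n
    fun s _ t _ _ => ((hcomm s t).smul_left _).smul_right _, sum_smul]
  simp only [smul_pow, gCirc_one_single_pow_eq_one]

theorem gCirc_pow_two_pow_eq_scalar_general {d m : ℕ} (hm : 0 < m)
    {F : Type*} [Field F] [Fintype F] (hcard : Fintype.card F = 2 ^ m)
    (g : ℕ) (hodd : Odd g) (c : ZMod (2 ^ d) → F) :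
    (gCirc g c) ^ (2 ^ d) = (∑ i : ZMod (2 ^ d), c i ^ (2 ^ d)) • (1 : Matrix (ZMod (2 ^ d)) (ZMod (2 ^ d)) F) := by
  have : CharP F 2 := ringChar.eq_iff.mp <| FiniteField.even_card_iff_char_two.mpr <| by
    rw [hcard, Nat.pow_mod, Nat.mod_self, zero_pow hm.ne', Nat.zero_mod]
  obtain ⟨e, he⟩ := gCirc_pow g c (2 ^ d)
  have hcirc : gCirc g c ^ 2 ^ d = gCirc 1 e := by
    rw [he, gCirc_congr (g' := 1) (by push_cast; exact ZMod.natCast_pow_two_pow_eq_one hodd d)]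
  have hscalar : gCirc g c ^ 2 ^ (d + d) = (∑ s, e s ^ 2 ^ d) • 1 := by
    rw [pow_add, pow_mul, hcirc, gCirc_one_pow_card]
  have hrowsum : ∑ s, e s ^ 2 ^ d = (∑ s, c s) ^ 2 ^ (d + d) := by
    simpa [hscalar, smul_mulVec] using
      congrFun (pow_mulVec_of_mulVec_eq_smul (gCirc_mulVec_one g c) (2 ^ (d + d))) 0
  rw [pow_char_pow_eq_smul_one 2 (hrowsum ▸ hscalar) (ZMod.card _).le, sum_pow_char_pow]

theorem gCirc_pow_two_pow_eq_scalar {d m : ℕ} (hm : 0 < m)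
    {F : Type*} [Field F] [Fintype F] (hcard : Fintype.card F = 2 ^ m)
    (g : ℕ) (hg : 1 < g) (hodd : Odd g) (c : ZMod (2 ^ d) → F) :
    (gCirc g c) ^ (2 ^ d) = (∑ i : ZMod (2 ^ d), c i ^ (2 ^ d)) • (1 : Matrix (ZMod (2 ^ d)) (ZMod (2 ^ d)) F) :=
  gCirc_pow_two_pow_eq_scalar_general hm hcard g hodd c
end

section
/- Let A be the g-circulant matrix of order 2^d × 2^d with first row (c_0, ..., c_{2^d - 1}) over F_{2^m}, where gcd(g, 2^d) = 1. Then det(A) = (c_0 + c_1 + ... + c_{2^d - 1})^(2^d). -/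
open Finset Matrix

theorem Finset.sum_pow_expChar_pow_of_commute {ι R : Type*} [Semiring R] (p n : ℕ) [ExpChar R p]
    (s : Finset ι) (x : ι → R) (hx : ∀ i ∈ s, ∀ j ∈ s, Commute (x i) (x j)) :
    (∑ i ∈ s, x i) ^ p ^ n = ∑ i ∈ s, x i ^ p ^ n := by
  classical
  induction s using Finset.induction_on with
  | empty => simp [zero_pow (expChar_pow_pos R p n).ne']
  | insert a s ha ih =>
    have hx' : ∀ i ∈ s, ∀ j ∈ s, Commute (x i) (x j) := fun i hi j hj =>
      hx i (mem_insert_of_mem hi) j (mem_insert_of_mem hj)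
    have ha_comm : Commute (x a) (∑ i ∈ s, x i) :=
      Commute.sum_right s x (x a) fun i hi => hx a (mem_insert_self a s) i (mem_insert_of_mem hi)
    rw [sum_insert ha, sum_insert ha, add_pow_expChar_pow_of_commute p n ha_comm, ih hx']

theorem CharTwo.intCast_unit_eq_one {R : Type*} [Ring R] [CharP R 2] (u : ℤˣ) :
    ((u : ℤ) : R) = 1 := by
  rcases Int.units_eq_one_or u with rfl | rfl <;> simp [CharTwo.neg_eq]

namespace Matrix

variable {n R : Type*} [AddCommGroup n] [Fintype n] [DecidableEq n] [CommRing R]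

theorem circulant_single_mul_circulant_single (i j : n) (a b : R) :
    circulant (Pi.single i a) * circulant (Pi.single j b) =
      circulant (Pi.single (i + j) (a * b)) := by
  ext k l
  simp [circulant_mul, mulVec_single, circulant_apply, Pi.single_apply, sub_eq_iff_eq_add, mul_comm]

theorem circulant_single_pow (i : n) (a : R) (k : ℕ) :
    circulant (Pi.single i a) ^ k = circulant (Pi.single (k • i) (a ^ k)) := by
  induction k with
  | zero => simp
  | succ k ih => rw [pow_succ, ih, circulant_single_mul_circulant_single, succ_nsmul, pow_succ]

theorem circulant_eq_sum_circulant_single (v : n → R) :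
    circulant v = ∑ i, circulant (Pi.single i (v i)) := by
  ext k l
  simp [circulant_apply, sum_apply, Pi.single_apply]

theorem circulant_pow_expChar_pow (p k : ℕ) [ExpChar R p] (hn : ∀ i : n, p ^ k • i = 0)
    (v : n → R) : circulant v ^ p ^ k = scalar n ((∑ i, v i) ^ p ^ k) := by
  have : ExpChar (Matrix n n R) p :=
    expChar_of_injective_algebraMap (fun _ _ => scalar_inj.mp) p
  rw [circulant_eq_sum_circulant_single, sum_pow_expChar_pow_of_commute p k _
    (fun i => circulant (Pi.single i (v i))) fun _ _ _ _ => circulant_mul_comm _ _]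
  simp only [circulant_single_pow, hn, circulant_single, sum_pow_char_pow, map_sum]

theorem det_circulant_of_card_eq_pow [IsReduced R] {p m : ℕ} [ExpChar R p]
    (hn : Fintype.card n = p ^ m) (v : n → R) : (circulant v).det = (∑ i, v i) ^ p ^ m := by
  apply iterateFrobenius_inj R p m
  simp only [iterateFrobenius_def, ← det_pow,
    circulant_pow_expChar_pow p m (fun _ => hn ▸ card_nsmul_eq_zero), scalar_apply,
    det_diagonal, prod_const, card_univ, hn, ← pow_mul]

end Matrix

theorem gCirc_eq_submatrix_transpose_circulant {k : ℕ} [NeZero k] {R : Type*} {g : ℕ}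
    (hg : g.Coprime k) (c : ZMod k → R) :
    gCirc g c = (circulant c)ᵀ.submatrix (Units.mulLeft (ZMod.unitOfCoprime g hg)) id := by
  ext i j
  simp [gCirc, circulant_apply]

theorem det_gCirc_of_charTwo {k : ℕ} [NeZero k] {R : Type*} [CommRing R] [CharP R 2] {g : ℕ}
    (hg : g.Coprime k) (c : ZMod k → R) : (gCirc g c).det = (circulant c).det := by
  rw [gCirc_eq_submatrix_transpose_circulant hg, det_permute, CharTwo.intCast_unit_eq_one,
    one_mul, det_transpose]

theorem gCirc_det_eq_general {d m : ℕ}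
    {F : Type*} [Field F] [Fintype F] (hcard : Fintype.card F = 2 ^ m)
    (g : ℕ) (hg : Nat.gcd g (2 ^ d) = 1) (c : ZMod (2 ^ d) → F) :
    (gCirc g c).det = (∑ i : ZMod (2 ^ d), c i) ^ (2 ^ d) := by
  have : CharP F 2 := charP_of_card_eq_prime_pow hcard
  rw [det_gCirc_of_charTwo hg, det_circulant_of_card_eq_pow (ZMod.card _)]

theorem gCirc_det_eq {d m : ℕ} (hm : 0 < m)
    {F : Type*} [Field F] [Fintype F] (hcard : Fintype.card F = 2 ^ m)
    (g : ℕ) (hg : Nat.gcd g (2 ^ d) = 1) (c : ZMod (2 ^ d) → F) :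
    (gCirc g c).det = (∑ i : ZMod (2 ^ d), c i) ^ (2 ^ d) :=
  gCirc_det_eq_general hcard g hg c
end
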